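/- arXiv:1209.3571 — 5 statements merged into one kernel-verified Lean document; each statement's English description precedes it below -/
import Mathlib

section
/- Let α, β, T, L, M, Z be real numbers with 0 < α ≤ β, T ≤ 0, Z ≥ 0, and M ≥ −α·T. Define c₁ := 2(α+β)(L+M) + (α+β)²·T and c₂ := αβ·T + α·L + β·M + Z. Then c₂ ≥ (α / (2(α+β))) · c₁. -/
/-! Clearing the denominator `2(α + β)`, the difference `c₂ - α c₁ / (2(α + β))` equals
`(β - α)(2M + αT)/2 + Z`. Both summands are nonnegative: `β ≥ α`, and the nefness condition
`M ≥ -αT` gives `2M + αT ≥ -αT ≥ 0` because `α > 0` and `T ≤ 0`. -/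

theorem c2_sub_bogomolov_eq {α β T L M Z : ℝ} (hαβ : α + β ≠ 0) :
    α * β * T + α * L + β * M + Z -
        (α / (2 * (α + β))) * (2 * (α + β) * (L + M) + (α + β) ^ 2 * T) =
      (β - α) * (2 * M + α * T) / 2 + Z := by
  field_simp
  ring

theorem two_mul_add_mul_nonneg {α T M : ℝ} (hα : 0 ≤ α) (hT : T ≤ 0) (hM : M ≥ -α * T) :
    0 ≤ 2 * M + α * T := by
  linarith [mul_nonpos_of_nonneg_of_nonpos hα hT]

/-- Numerical content of the Bogomolov-type bound `c₂(G) ≥ (α/(2(α+β)))·c₁(G)²`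
from the Brosius extension for a weakly positive rank two bundle. -/
theorem brosius_c2_bound (α β T L M Z : ℝ)
    (hα : 0 < α) (hαβ : α ≤ β) (hT : T ≤ 0) (hZ : 0 ≤ Z) (hM : M ≥ -α * T) :
    α * β * T + α * L + β * M + Z ≥
      (α / (2 * (α + β))) * (2 * (α + β) * (L + M) + (α + β) ^ 2 * T) := by
  have hsum : α + β ≠ 0 := by linarith
  have hM' : 0 ≤ 2 * M + α * T := two_mul_add_mul_nonneg hα.le hT hM
  rw [ge_iff_le, ← sub_nonneg, c2_sub_bogomolov_eq hsum]
  exact add_nonneg (div_nonneg (mul_nonneg (sub_nonneg.2 hαβ) hM') zero_le_two) hZ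
end

section
/- Let g and c be real numbers with g ≥ 5 and c > 0, and let d be a real number with (2/9)·c ≤ d < ((g+1)/(2(g+2)))·c. Then ((2g/(g+2))·c − 3d) / (((g+1)/(2(g+2)))·c − d) ≥ 24(g−1)/(5g+1). -/
/-! With `D = ((g+1)/(2(g+2)))c - d` the denominator, the numerator equals
`3D + (g-3)c/(2(g+2))`, so the slope is `3 + (g-3)c/(2(g+2)D)`, which for `g ≥ 3` decreases in
`D > 0`. The bound `d ≥ 2c/9` is exactly `D ≤ (5g+1)c/(18(g+2))`, and at that extreme value
the slope equals `24(g-1)/(5g+1)`. -/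

lemma add_div_le_add_mul_div {m a k c D : ℝ} (hk : 0 < k) (hD : 0 < D) (ha : 0 ≤ a)
    (hDk : D ≤ k * c) : m + a / k ≤ (m * D + a * c) / D := by
  rw [add_div, mul_div_cancel_right₀ m hD.ne', mul_div_assoc, div_eq_mul_one_div a k]
  refine add_le_add_right (mul_le_mul_of_nonneg_left ?_ ha) m
  rw [div_le_div_iff₀ hk hD, one_mul]
  linarith

theorem trigonal_slope_bound_general_general (g c d : ℝ) (hg : g ≥ 5)
    (hd1 : (2 / 9) * c ≤ d) (hd2 : d < ((g + 1) / (2 * (g + 2))) * c) :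
    ((2 * g / (g + 2)) * c - 3 * d) / (((g + 1) / (2 * (g + 2))) * c - d) ≥
      24 * (g - 1) / (5 * g + 1) := by
  have hg2 : g + 2 ≠ 0 := by linarith
  have h5g1 : 5 * g + 1 ≠ 0 := by linarith
  set D := ((g + 1) / (2 * (g + 2))) * c - d with hD
  have hnum : (2 * g / (g + 2)) * c - 3 * d = 3 * D + (g - 3) / (2 * (g + 2)) * c := by
    rw [hD]; field_simp; ring
  have hD_le : D ≤ (5 * g + 1) / (18 * (g + 2)) * c := by
    have : D = (5 * g + 1) / (18 * (g + 2)) * c - (d - 2 / 9 * c) := by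
      rw [hD]; field_simp; ring
    linarith
  have hbound : 24 * (g - 1) / (5 * g + 1) =
      3 + (g - 3) / (2 * (g + 2)) / ((5 * g + 1) / (18 * (g + 2))) := by
    field_simp; ring
  rw [hnum, hbound, ge_iff_le]
  exact add_div_le_add_mul_div (div_pos (by linarith) (by linarith)) (sub_pos.2 hd2)
    (div_nonneg (by linarith) (by linarith)) hD_le

/-- Numerical content of the slope bound `s(f) ≥ 24(g-1)/(5g+1)` for trigonal
fibrations. -/
theorem trigonal_slope_bound_general (g c d : ℝ) (hg : g ≥ 5) (hc : c > 0)
    (hd1 : (2 / 9) * c ≤ d) (hd2 : d < ((g + 1) / (2 * (g + 2))) * c) :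
    ((2 * g / (g + 2)) * c - 3 * d) / (((g + 1) / (2 * (g + 2))) * c - d) ≥
      24 * (g - 1) / (5 * g + 1) :=
  trigonal_slope_bound_general_general g c d hg hd1 hd2
end

section
/- Let g and c be real numbers with g ≥ 4 and c > 0, and let d be a real number with (1/4)·c ≤ d < ((g+1)/(2(g+2)))·c. Then ((2g/(g+2))·c − 3d) / (((g+1)/(2(g+2)))·c − d) ≥ 5 − 6/g. -/
/-! The denominator is positive, and clearing it leaves the nonnegative remainder
`((g - 3) / g) * (2 * d - c / 2)`: the lower bound `d ≥ c / 4` on `c₂(E)` is exactly what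
makes the bound `5 - 6 / g` hold. -/

lemma slope_numerator_sub_mul_denominator (g c d : ℝ) (hg : g ≠ 0) (hg2 : g + 2 ≠ 0) :
    (2 * g / (g + 2)) * c - 3 * d - (5 - 6 / g) * (((g + 1) / (2 * (g + 2))) * c - d) =
      ((g - 3) / g) * (2 * d - c / 2) := by
  field_simp
  ring

theorem trigonal_slope_bound_even_general (g c d : ℝ) (hg : g ≥ 4)
    (hd1 : (1 / 4) * c ≤ d) (hd2 : d < ((g + 1) / (2 * (g + 2))) * c) :
    ((2 * g / (g + 2)) * c - 3 * d) / (((g + 1) / (2 * (g + 2))) * c - d) ≥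
      5 - 6 / g := by
  have hden : 0 < ((g + 1) / (2 * (g + 2))) * c - d := sub_pos.mpr hd2
  have hremainder : 0 ≤ ((g - 3) / g) * (2 * d - c / 2) :=
    mul_nonneg (div_nonneg (by linarith) (by linarith)) (by linarith)
  rw [← slope_numerator_sub_mul_denominator g c d (by linarith) (by linarith)] at hremainder
  rw [ge_iff_le, le_div_iff₀ hden]
  linarith

/-- Numerical content of the slope bound `s(f) ≥ 5 - 6/g` for general trigonal
fibrations of even genus. -/
theorem trigonal_slope_bound_even (g c d : ℝ) (hg : g ≥ 4) (hc : c > 0)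
    (hd1 : (1 / 4) * c ≤ d) (hd2 : d < ((g + 1) / (2 * (g + 2))) * c) :
    ((2 * g / (g + 2)) * c - 3 * d) / (((g + 1) / (2 * (g + 2))) * c - d) ≥
      5 - 6 / g :=
  trigonal_slope_bound_even_general g c d hg hd1 hd2
end

section
/- Let g, c, e, f be real numbers with g > 1, c > 0, f ≥ (2/(g+3))·c, f < ((g+1)/(g+3))·c, e ≥ (1/4)(c + f), and e < ((g+2)/(2(g+3)))·c. Then ((2(g+1)/(g+3))·c − 4e + f) / (((g+2)/(2(g+3)))·c − e) ≥ 4 + (f − (2/(g+3))·c) / (((g+1)/(4(g+3)))·c − f/4). -/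
/-!
Write `m = f - 2c/(g+3)` and `D(e) = (g+2)/(2(g+3)) · c - e`. The numerator on the left is
`4 D(e) + m`, so the left side is `4 + m / D(e)`, which decreases in `D` because `m ≥ 0`.
The right side is the same expression at the Index-Theorem value `e = (c+f)/4`, where
`D` equals `(g+1)/(4(g+3)) · c - f/4`, and `e ≥ (c+f)/4` makes `D(e)` no larger than that.
-/

theorem mul_add_div_le_mul_add_div_of_le {K : Type*} [Field K] [LinearOrder K] [IsStrictOrderedRing K]
    {k m x y : K} (hm : 0 ≤ m) (hx : 0 < x) (hxy : x ≤ y) :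
    (k * y + m) / y ≤ (k * x + m) / x := by
  rw [← add_div' _ _ _ hx.ne', ← add_div' _ _ _ (hx.trans_le hxy).ne']
  gcongr

theorem fourgonal_slope_reduction_general (g c e f : ℝ) (hg : g > 1)
    (hf1 : f ≥ (2 / (g + 3)) * c)
    (he1 : e ≥ (1 / 4) * (c + f)) (he2 : e < ((g + 2) / (2 * (g + 3))) * c) :
    ((2 * (g + 1) / (g + 3)) * c - 4 * e + f) /
        (((g + 2) / (2 * (g + 3))) * c - e) ≥
      4 + (f - (2 / (g + 3)) * c) / (((g + 1) / (4 * (g + 3))) * c - f / 4) := by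
  have hg3 : g + 3 ≠ 0 := by linarith
  have hnum : (2 * (g + 1) / (g + 3)) * c - 4 * e + f
      = 4 * (((g + 2) / (2 * (g + 3))) * c - e) + (f - (2 / (g + 3)) * c) := by
    field_simp
    ring
  have hden : ((g + 1) / (4 * (g + 3))) * c - f / 4
      = ((g + 2) / (2 * (g + 3))) * c - e + (e - (1 / 4) * (c + f)) := by
    field_simp
    ring
  rw [hnum, add_div' _ _ _ (by rw [hden]; linarith)]
  refine mul_add_div_le_mul_add_div_of_le (by linarith) (by linarith) ?_
  rw [hden]
  linarith

/-- Numerical content of the slope reduction for fourgonal fibrations: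
substituting the Index-Theorem bound for `c₂(E)` gives the formula of
Corollary `formulaslope`. -/
theorem fourgonal_slope_reduction (g c e f : ℝ) (hg : g > 1) (hc : c > 0)
    (hf1 : f ≥ (2 / (g + 3)) * c) (hf2 : f < ((g + 1) / (g + 3)) * c)
    (he1 : e ≥ (1 / 4) * (c + f)) (he2 : e < ((g + 2) / (2 * (g + 3))) * c) :
    ((2 * (g + 1) / (g + 3)) * c - 4 * e + f) /
        (((g + 2) / (2 * (g + 3))) * c - e) ≥
      4 + (f - (2 / (g + 3)) * c) / (((g + 1) / (4 * (g + 3))) * c - f / 4) :=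
  fourgonal_slope_reduction_general g c e f hg hf1 he1 he2
end

section
/- Let g, c, f be real numbers with g > 1, c > 0, and (1/6)·c ≤ f < ((g+1)/(g+3))·c. Then 4 + (f − (2/(g+3))·c) / (((g+1)/(4(g+3)))·c − f/4) ≥ 24(g−1)/(5g+3). -/
/-!
The lower bound for the slope simplifies to `4(g-1)c / ((g+1)c - (g+3)f)`, which increases with
`f` on `f < (g+1)c/(g+3)`. Hence Schreyer's bound `f ≥ c/6` lets us evaluate at `f = c/6`, where
the value is `24(g-1)/(5g+3)`.
-/

/-- The paper's slope bound, with `c = c₁(E)²` and `f = c₂(F)`. -/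
noncomputable def slopeLowerBound (g c f : ℝ) : ℝ :=
  4 + (f - (2 / (g + 3)) * c) / (((g + 1) / (4 * (g + 3))) * c - f / 4)

lemma slopeLowerBound_eq {g c f : ℝ} (hg : g + 3 ≠ 0) (hf : (g + 1) * c - (g + 3) * f ≠ 0) :
    slopeLowerBound g c f = 4 * (g - 1) * c / ((g + 1) * c - (g + 3) * f) := by
  have hD : ((g + 1) / (4 * (g + 3))) * c - f / 4 =
      ((g + 1) * c - (g + 3) * f) / (4 * (g + 3)) := by
    field_simp
  rw [slopeLowerBound, hD, div_div_eq_mul_div, eq_div_iff hf, add_mul, div_mul_cancel₀ _ hf]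
  field_simp
  ring

lemma slopeLowerBound_sixth {g c : ℝ} (hg : 1 < g) (hc : c ≠ 0) :
    slopeLowerBound g c (c / 6) = 24 * (g - 1) / (5 * g + 3) := by
  have h53 : 5 * g + 3 ≠ 0 := by linarith
  have hdenom : (g + 1) * c - (g + 3) * (c / 6) = (5 * g + 3) * c / 6 := by ring
  rw [slopeLowerBound_eq (by linarith) (by rw [hdenom]; positivity), hdenom]
  field_simp
  ring

lemma slopeLowerBound_mono {g c f₁ f₂ : ℝ} (hg : 1 ≤ g) (hc : 0 ≤ c) (hf : f₁ ≤ f₂)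
    (hf₂ : (g + 3) * f₂ < (g + 1) * c) :
    slopeLowerBound g c f₁ ≤ slopeLowerBound g c f₂ := by
  have hdenom : (g + 1) * c - (g + 3) * f₂ ≤ (g + 1) * c - (g + 3) * f₁ := by
    have := mul_le_mul_of_nonneg_left hf (by linarith : (0 : ℝ) ≤ g + 3)
    linarith
  rw [slopeLowerBound_eq (by linarith) (by linarith),
    slopeLowerBound_eq (by linarith) (by linarith)]
  exact div_le_div_of_nonneg_left (by positivity) (by linarith) hdenom

/-- Numerical content of the bound `s(f) ≥ 24(g-1)/(5g+3)` for fourgonal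
fibrations whose gonal covering does not factorize. -/
theorem fourgonal_slope_bound_nonfactorizing (g c f : ℝ) (hg : g > 1)
    (hc : c > 0) (hf1 : (1 / 6) * c ≤ f) (hf2 : f < ((g + 1) / (g + 3)) * c) :
    4 + (f - (2 / (g + 3)) * c) / (((g + 1) / (4 * (g + 3))) * c - f / 4) ≥
      24 * (g - 1) / (5 * g + 3) := by
  have hf2' : (g + 3) * f < (g + 1) * c := by
    rwa [div_mul_eq_mul_div, lt_div_iff₀ (by linarith), mul_comm] at hf2
  calc 24 * (g - 1) / (5 * g + 3) = slopeLowerBound g c (c / 6) :=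
        (slopeLowerBound_sixth hg hc.ne').symm
    _ ≤ slopeLowerBound g c f := slopeLowerBound_mono hg.le hc.le (by linarith) hf2'
end
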